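/- If the complete graph K_{2n} has an interval edge-coloring with shift vector (b_1, b_2, …, b_{n-1}), then it also has an interval edge-coloring whose shift vector is the reversal (b_{n-1}, b_{n-2}, …, b_1). -/

import Mathlib

/-- An interval `t`-coloring of the complete graph on `Fin m`:
a proper edge-coloring with colors in `{1,…,t}`, using every color,
such that the spectrum (set of colors incident to each vertex) is an
interval of consecutive integers. -/
def IsIntervalColoring (m t : ℕ) (c : Sym2 (Fin m) → ℕ) : Prop :=
  (∀ u v w : Fin m, u ≠ v → u ≠ w → v ≠ w → c s(u, v) ≠ c s(u, w)) ∧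
  (∀ u v : Fin m, u ≠ v → c s(u, v) ∈ Finset.Icc 1 t) ∧
  (∀ k : ℕ, 1 ≤ k → k ≤ t → ∃ u v : Fin m, u ≠ v ∧ c s(u, v) = k) ∧
  (∀ v : Fin m, ∃ a b : ℕ,
    {k : ℕ | ∃ u : Fin m, u ≠ v ∧ c s(u, v) = k} = Set.Icc a b)

/-- `W m` is the greatest `t` for which the complete graph on `m` vertices
has an interval `t`-coloring. -/
noncomputable def W (m : ℕ) : ℕ :=
  sSup {t : ℕ | ∃ c : Sym2 (Fin m) → ℕ, IsIntervalColoring m t c}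

/-- The smallest color on an edge incident to `v`. -/
noncomputable def minColor (m : ℕ) (c : Sym2 (Fin m) → ℕ) (v : Fin m) : ℕ :=
  sInf {k : ℕ | ∃ u : Fin m, u ≠ v ∧ c s(u, v) = k}

/-- The list `m_1 ≤ m_2 ≤ … ≤ m_{2n}` of smallest incident colors of the
vertices, in nondecreasing order. -/
noncomputable def sortedMins (m : ℕ) (c : Sym2 (Fin m) → ℕ) : List ℕ :=
  ((Finset.univ : Finset (Fin m)).val.map (minColor m c)).sort (· ≤ ·)

/-- The `i`-th entry `b_i = m_{2i+1} - m_{2i-1}` of the shift vector of a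
coloring of `K_{2n}` (1-based positions; `m_j` is the `j`-th sorted smallest
incident color). Meaningful for `1 ≤ i ≤ n-1`. -/
noncomputable def shiftVec (n : ℕ) (c : Sym2 (Fin (2 * n)) → ℕ) (i : ℕ) : ℕ :=
  (sortedMins (2 * n) c).getD (2 * i) 0 - (sortedMins (2 * n) c).getD (2 * i - 2) 0

/-!
Replacing every color `x` by `t + 1 - x` gives again an interval `t`-coloring of `K_{2n}`; it
sends the spectrum `[s(v), s(v) + 2n - 2]` of each vertex to `[K - s(v), K - s(v) + 2n - 2]` with
`K = t + 3 - 2n`, so the sorted smallest colors become `K - m_{2n} ≤ … ≤ K - m_1`. The shift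
vector of the new coloring is then the old one read backwards, provided `m_{2i-1} = m_{2i}`.
This pairing holds because for every `k` the number of vertices with `s(v) ≤ k` is even: the
vertices at which `k` is a color are matched by the edges of color `k`, and every other vertex
with `s(v) ≤ k` has `s(v) ≤ k - (2n - 1)`, so induction on `k` applies.
-/

open Finset

theorem Finset.even_card_of_involution {α : Type*} {s : Finset α} (g : ∀ a ∈ s, α)
    (hg_ne : ∀ a ha, g a ha ≠ a) (g_mem : ∀ a ha, g a ha ∈ s)
    (hg_invol : ∀ a ha, g (g a ha) (g_mem a ha) = a) : Even #s := by
  rw [← ZMod.natCast_eq_zero_iff_even, card_eq_sum_ones, Nat.cast_sum, Nat.cast_one]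
  exact sum_involution g (fun _ _ => rfl) (fun a ha _ => hg_ne a ha) g_mem hg_invol

theorem List.getElem_two_mul_eq_of_even_countP_le {α : Type*} [LinearOrder α] {L : List α}
    (hL : L.Pairwise (· ≤ ·)) (heven : ∀ k, Even (L.countP (· ≤ k))) {j : ℕ}
    (hj : 2 * j + 1 < L.length) : L[2 * j] = L[2 * j + 1] := by
  have hmono {p q : ℕ} (hp : p < L.length) (hq : q < L.length) (hpq : p ≤ q) :
      L[p] ≤ L[q] := by
    obtain rfl | hpq := hpq.eq_or_lt
    · exact le_rfl
    · exact List.pairwise_iff_getElem.1 hL p q hp hq hpq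
  by_contra hne
  have hlt : L[2 * j] < L[2 * j + 1] := (hmono _ _ (Nat.le_succ _)).lt_of_ne hne
  generalize hk : L[2 * j] = k at hlt
  have htake : (L.take (2 * j + 1)).countP (· ≤ k) = 2 * j + 1 := by
    rw [List.countP_eq_length.2, List.length_take_of_le hj.le]
    intro x hx
    obtain ⟨p, hp, rfl⟩ := List.mem_iff_getElem.1 hx
    rw [List.length_take_of_le hj.le] at hp
    simpa [← hk] using hmono _ _ (by omega)
  have hdrop : (L.drop (2 * j + 1)).countP (· ≤ k) = 0 := by
    rw [List.countP_eq_zero]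
    intro x hx
    obtain ⟨p, hp, rfl⟩ := List.mem_iff_getElem.1 hx
    rw [List.length_drop] at hp
    simpa using hlt.trans_le (hmono (hp := hj) (by omega) (by omega) : _ ≤ L[2 * j + 1 + p])
  have hodd := heven k
  rw [← L.take_append_drop (2 * j + 1), List.countP_append, htake, hdrop] at hodd
  exact Nat.not_even_iff_odd.2 (odd_two_mul_add_one j) hodd

theorem List.getD_map_reverse {α β : Type*} (L : List α) (f : α → β) (d : α) (e : β)
    {p : ℕ} (hp : p < L.length) :
    (L.reverse.map f).getD p e = f (L.getD (L.length - 1 - p) d) := by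
  rw [List.getD_eq_getElem _ _ (by simpa using hp), List.getD_eq_getElem _ _ (by omega)]
  simp

def colorsAt (m : ℕ) (c : Sym2 (Fin m) → ℕ) (v : Fin m) : Set ℕ :=
  {k | ∃ u : Fin m, u ≠ v ∧ c s(u, v) = k}

namespace IsIntervalColoring

variable {m t : ℕ} {c : Sym2 (Fin m) → ℕ}

theorem eq_of_color_eq (hc : IsIntervalColoring m t c) {u v w : Fin m} (hu : u ≠ v)
    (hw : w ≠ v) (h : c s(u, v) = c s(w, v)) : u = w := by
  by_contra huw
  exact hc.1 v u w hu.symm hw.symm huw (by rwa [Sym2.eq_swap, Sym2.eq_swap (a := v)])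

theorem color_mem_Icc (hc : IsIntervalColoring m t c) {u v : Fin m} (huv : u ≠ v) :
    1 ≤ c s(u, v) ∧ c s(u, v) ≤ t :=
  Finset.mem_Icc.1 (hc.2.1 u v huv)

theorem colorsAt_eq_Icc (hc : IsIntervalColoring m t c) (hm : 2 ≤ m) (v : Fin m) :
    colorsAt m c v = Set.Icc (minColor m c v) (minColor m c v + (m - 2)) := by
  obtain ⟨a, b, hab⟩ := hc.2.2.2 v
  have hcard : (colorsAt m c v).ncard = m - 1 := by
    have himage : colorsAt m c v = (fun u => c s(u, v)) '' {v}ᶜ := by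
      ext k; simp [colorsAt]
    have hinj : Set.InjOn (fun u => c s(u, v)) {v}ᶜ := fun _ hu _ hw h =>
      hc.eq_of_color_eq hu hw h
    rw [himage, hinj.ncard_image, Set.ncard_compl, Set.ncard_singleton, Nat.card_eq_fintype_card,
      Fintype.card_fin]
  rw [colorsAt, hab, ← Finset.coe_Icc, Set.ncard_coe_finset, Nat.card_Icc] at hcard
  have hmin : minColor m c v = a := by
    rw [minColor, hab]; exact csInf_Icc (by omega)
  rw [colorsAt, hab, hmin]
  congr 1
  omega

theorem one_le_minColor (hc : IsIntervalColoring m t c) (hm : 2 ≤ m) (v : Fin m) :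
    1 ≤ minColor m c v := by
  have hmem : minColor m c v ∈ colorsAt m c v := by
    rw [hc.colorsAt_eq_Icc hm v]; simp
  obtain ⟨u, hu, hcu⟩ := hmem
  exact hcu ▸ (hc.color_mem_Icc hu).1

theorem minColor_add_le (hc : IsIntervalColoring m t c) (hm : 2 ≤ m) (v : Fin m) :
    minColor m c v + (m - 2) ≤ t := by
  have hmem : minColor m c v + (m - 2) ∈ colorsAt m c v := by
    rw [hc.colorsAt_eq_Icc hm v]; simp
  obtain ⟨u, hu, hcu⟩ := hmem
  exact hcu ▸ (hc.color_mem_Icc hu).2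

open Classical in
theorem even_card_filter_mem_colorsAt (hc : IsIntervalColoring m t c) (k : ℕ) :
    Even #{v | k ∈ colorsAt m c v} := by
  have hmem : ∀ v ∈ univ.filter (fun v => k ∈ colorsAt m c v),
      ∃ u, u ≠ v ∧ c s(u, v) = k := fun v hv => (mem_filter.1 hv).2
  choose partner hne hcol using hmem
  have partner_mem v hv : partner v hv ∈ univ.filter (fun v => k ∈ colorsAt m c v) :=
    mem_filter.2 ⟨mem_univ _, v, (hne v hv).symm, by rw [Sym2.eq_swap, hcol]⟩
  refine even_card_of_involution partner hne partner_mem fun v hv => ?_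
  exact hc.eq_of_color_eq (hne _ _) (hne v hv).symm (by rw [hcol, Sym2.eq_swap, hcol])

theorem even_card_filter_minColor_le (hc : IsIntervalColoring m t c) (hm : 2 ≤ m) (k : ℕ) :
    Even #{v | minColor m c v ≤ k} := by
  classical
  induction k using Nat.strong_induction_on with
  | _ k ih =>
    obtain rfl | hk := k.eq_zero_or_pos
    · rw [filter_false_of_mem fun v _ => Nat.not_le.2 (hc.one_le_minColor hm v), card_empty]
      exact Even.zero
    have hsplit : univ.filter (fun v => minColor m c v ≤ k) =
        (univ.filter fun v => k ∈ colorsAt m c v) ∪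
          univ.filter fun v => minColor m c v ≤ k - (m - 1) := by
      ext v
      simp only [mem_union, mem_filter_univ, hc.colorsAt_eq_Icc hm v, Set.mem_Icc]
      have := hc.one_le_minColor hm v
      omega
    have hdisj : Disjoint (univ.filter fun v => k ∈ colorsAt m c v)
        (univ.filter fun v => minColor m c v ≤ k - (m - 1)) := by
      refine disjoint_filter.2 fun v _ hv => ?_
      simp only [hc.colorsAt_eq_Icc hm v, Set.mem_Icc] at hv
      have := hc.one_le_minColor hm v
      omega
    rw [hsplit, card_union_of_disjoint hdisj]
    exact (hc.even_card_filter_mem_colorsAt k).add (ih _ (by omega))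

theorem colorsAt_reverse (hc : IsIntervalColoring m t c) (hm : 2 ≤ m) (v : Fin m) :
    colorsAt m (fun e => t + 1 - c e) v =
      Set.Icc (t + 1 - (minColor m c v + (m - 2))) (t + 1 - minColor m c v) := by
  have hv := hc.colorsAt_eq_Icc hm v
  have hbound := hc.minColor_add_le hm v
  ext k
  simp only [colorsAt, Set.mem_ofPred_eq, Set.mem_Icc]
  constructor
  · rintro ⟨u, hu, rfl⟩
    have : c s(u, v) ∈ colorsAt m c v := ⟨u, hu, rfl⟩
    rw [hv, Set.mem_Icc] at this
    omega
  · intro hk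
    have : t + 1 - k ∈ colorsAt m c v := by rw [hv, Set.mem_Icc]; omega
    obtain ⟨u, hu, hcu⟩ := this
    exact ⟨u, hu, by omega⟩

theorem reverse (hc : IsIntervalColoring m t c) (hm : 2 ≤ m) :
    IsIntervalColoring m t (fun e => t + 1 - c e) := by
  refine ⟨fun u v w huv huw hvw h => ?_, fun u v huv => ?_, fun k hk1 hkt => ?_,
    fun v => ⟨_, _, hc.colorsAt_reverse hm v⟩⟩
  · have := hc.color_mem_Icc huv
    have := hc.color_mem_Icc huw
    exact hc.1 u v w huv huw hvw (by simp only at h; omega)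
  · have := hc.color_mem_Icc huv
    simp only [Finset.mem_Icc]
    omega
  · obtain ⟨u, v, huv, hcuv⟩ := hc.2.2.1 (t + 1 - k) (by omega) (by omega)
    exact ⟨u, v, huv, by simp only; omega⟩

theorem minColor_reverse (hc : IsIntervalColoring m t c) (hm : 2 ≤ m) (v : Fin m) :
    minColor m (fun e => t + 1 - c e) v = t + 1 - (m - 2) - minColor m c v := by
  have := hc.minColor_add_le hm v
  change sInf (colorsAt m (fun e => t + 1 - c e) v) = _
  rw [hc.colorsAt_reverse hm v, csInf_Icc (by omega)]
  omega

end IsIntervalColoring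

theorem sortedMins_length (m : ℕ) (c : Sym2 (Fin m) → ℕ) : (sortedMins m c).length = m := by
  simp [sortedMins]

theorem pairwise_sortedMins (m : ℕ) (c : Sym2 (Fin m) → ℕ) :
    (sortedMins m c).Pairwise (· ≤ ·) :=
  Multiset.pairwise_sort _ _

theorem coe_sortedMins (m : ℕ) (c : Sym2 (Fin m) → ℕ) :
    (sortedMins m c : Multiset ℕ) = univ.val.map (minColor m c) :=
  Multiset.sort_eq _ _

theorem countP_sortedMins (m : ℕ) (c : Sym2 (Fin m) → ℕ) (k : ℕ) :
    (sortedMins m c).countP (· ≤ k) = #{v | minColor m c v ≤ k} := by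
  rw [← Multiset.coe_countP, coe_sortedMins, Multiset.countP_map]
  rfl

theorem exists_minColor_eq_of_mem_sortedMins {m : ℕ} {c : Sym2 (Fin m) → ℕ} {x : ℕ}
    (hx : x ∈ sortedMins m c) : ∃ v, minColor m c v = x := by
  rw [← Multiset.mem_coe, coe_sortedMins, Multiset.mem_map] at hx
  obtain ⟨v, -, hv⟩ := hx
  exact ⟨v, hv⟩

namespace IsIntervalColoring

variable {m t : ℕ} {c : Sym2 (Fin m) → ℕ}

theorem getD_sortedMins_add_le (hc : IsIntervalColoring m t c) (hm : 2 ≤ m) {p : ℕ}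
    (hp : p < m) : (sortedMins m c).getD p 0 + (m - 2) ≤ t := by
  rw [List.getD_eq_getElem _ _ (by rwa [sortedMins_length])]
  obtain ⟨v, hv⟩ := exists_minColor_eq_of_mem_sortedMins (List.getElem_mem _)
  exact hv ▸ hc.minColor_add_le hm v

theorem getD_sortedMins_eq_of_div_two_eq (hc : IsIntervalColoring m t c) (hm : 2 ≤ m)
    {p q : ℕ} (hp : p < m) (hq : q < m) (hpq : p / 2 = q / 2) :
    (sortedMins m c).getD p 0 = (sortedMins m c).getD q 0 := by
  have hpair {j : ℕ} (hj : 2 * j + 1 < m) :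
      (sortedMins m c).getD (2 * j) 0 = (sortedMins m c).getD (2 * j + 1) 0 := by
    have hlen := sortedMins_length m c
    rw [List.getD_eq_getElem _ _ (by omega), List.getD_eq_getElem _ _ (by omega)]
    refine List.getElem_two_mul_eq_of_even_countP_le (pairwise_sortedMins m c) (fun k => ?_) _
    rw [countP_sortedMins]
    exact hc.even_card_filter_minColor_le hm k
  have heven_index {p : ℕ} (hp : p < m) :
      (sortedMins m c).getD p 0 = (sortedMins m c).getD (2 * (p / 2)) 0 := by
    obtain h | h := Nat.mod_two_eq_zero_or_one p
    · congr 1; omega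
    · rw [hpair (j := p / 2) (by omega)]; congr 1; omega
  rw [heven_index hp, heven_index hq, hpq]

theorem sortedMins_reverse (hc : IsIntervalColoring m t c) (hm : 2 ≤ m) :
    sortedMins m (fun e => t + 1 - c e) =
      (sortedMins m c).reverse.map (t + 1 - (m - 2) - ·) := by
  refine List.Perm.eq_of_pairwise' (pairwise_sortedMins _ _) ?_ (Multiset.coe_eq_coe.1 ?_)
  · rw [List.pairwise_map, List.pairwise_reverse]
    exact (pairwise_sortedMins m c).imp fun h => Nat.sub_le_sub_left h _
  · rw [← Multiset.map_coe, Multiset.coe_reverse, coe_sortedMins, coe_sortedMins,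
      Multiset.map_map]
    exact Multiset.map_congr rfl fun v _ => hc.minColor_reverse hm v

end IsIntervalColoring

/-- If `K_{2n}` has an interval edge-coloring with shift vector
`(b_1,…,b_{n-1})`, then it also has one whose shift vector is the reversal
`(b_{n-1},…,b_1)`. -/
theorem statement_18 (n t : ℕ) (c : Sym2 (Fin (2 * n)) → ℕ)
    (hc : IsIntervalColoring (2 * n) t c) :
    ∃ (t' : ℕ) (c' : Sym2 (Fin (2 * n)) → ℕ),
      IsIntervalColoring (2 * n) t' c' ∧
      ∀ i : ℕ, 1 ≤ i → i ≤ n - 1 → shiftVec n c' i = shiftVec n c (n - i) := by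
  obtain hn | hn := lt_or_ge n 2
  · exact ⟨t, c, hc, fun i _ _ => by omega⟩
  have hm : 2 ≤ 2 * n := by omega
  refine ⟨t, fun e => t + 1 - c e, hc.reverse hm, fun i hi hin => ?_⟩
  have hlen := sortedMins_length (2 * n) c
  rw [shiftVec, shiftVec, hc.sortedMins_reverse hm, List.getD_map_reverse _ _ 0 _ (by omega),
    List.getD_map_reverse _ _ 0 _ (by omega), hlen]
  -- the reversed coloring has `m'_{2i+1} = K - m_{2n-2i}` and `m'_{2i-1} = K - m_{2n-2i+2}`;
  -- the pairing `m_{2l-1} = m_{2l}` moves both indices down by one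
  have hlow := hc.getD_sortedMins_eq_of_div_two_eq hm (p := 2 * n - 1 - 2 * i)
    (q := 2 * (n - i) - 2) (by omega) (by omega) (by omega)
  have hhigh := hc.getD_sortedMins_eq_of_div_two_eq hm (p := 2 * n - 1 - (2 * i - 2))
    (q := 2 * (n - i)) (by omega) (by omega) (by omega)
  have hbound := hc.getD_sortedMins_add_le hm (p := 2 * n - 1 - (2 * i - 2)) (by omega)
  omega
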